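/- arXiv:2202.06141 — 2 statements merged into one kernel-verified Lean document; each statement's English description precedes it below -/
import Mathlib

section
/- For all w in the closed l∞-ball B̄_β, the smoothed function satisfies |f_α(w) − f(w)| ≤ α·L₀·√(d/12), where L₀ := E[L₀(ξ)]. -/
open MeasureTheory Filter
open scoped Classical BigOperators

noncomputable section

/-- The closed `l∞`-ball of radius `r` centered at `0` in `ℝ^d`. -/
def Binf (d : ℕ) (r : ℝ) : Set (EuclideanSpace ℝ (Fin d)) := {z | ∀ i, |z i| ≤ r}

/-- The uniform probability distribution on the closed `l∞`-ball of radius `r` in `ℝ^d`. -/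
def unifMeas (d : ℕ) (r : ℝ) : Measure (EuclideanSpace ℝ (Fin d)) :=
  (volume (Binf d r))⁻¹ • volume.restrict (Binf d r)

/-- The point `w + u` with its `i`-th coordinate replaced by `w i + s`. -/
def shiftPt {d : ℕ} (s : ℝ) (w u : EuclideanSpace ℝ (Fin d)) (i : Fin d) :
    EuclideanSpace ℝ (Fin d) :=
  w + u + (s - u i) • EuclideanSpace.single i (1 : ℝ)

/-- The finite difference `df_i(w, u_{∖i})` of a function `f : ℝ^d → ℝ`. -/
def dfFD {d : ℕ} (α : ℝ) (f : EuclideanSpace ℝ (Fin d) → ℝ)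
    (i : Fin d) (w u : EuclideanSpace ℝ (Fin d)) : ℝ :=
  f (shiftPt (α / 2) w u i) - f (shiftPt (-(α / 2)) w u i)

/-- The finite-difference vector `dF(w,u,ξ)` whose `i`-th component is
`F(…, w_i + α/2, …, ξ) − F(…, w_i − α/2, …, ξ)`. -/
def dFvec {d p : ℕ} (α : ℝ)
    (F : EuclideanSpace ℝ (Fin d) → EuclideanSpace ℝ (Fin p) → ℝ)
    (w u : EuclideanSpace ℝ (Fin d)) (ξ : EuclideanSpace ℝ (Fin p)) :
    EuclideanSpace ℝ (Fin d) :=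
  ∑ i : Fin d,
    (F (shiftPt (α / 2) w u i) ξ - F (shiftPt (-(α / 2)) w u i) ξ) • EuclideanSpace.single i (1 : ℝ)

/-- `f(w) := E[F(w,ξ)]`. -/
def fbar {d p : ℕ} (μξ : Measure (EuclideanSpace ℝ (Fin p)))
    (F : EuclideanSpace ℝ (Fin d) → EuclideanSpace ℝ (Fin p) → ℝ)
    (w : EuclideanSpace ℝ (Fin d)) : ℝ := ∫ ξ, F w ξ ∂μξ

/-- The randomized smoothing `f_α(w) := E[f(w+u)]`, `u` uniform on `B̄_{α/2}`. -/
def smoothed {d : ℕ} (α : ℝ) (f : EuclideanSpace ℝ (Fin d) → ℝ)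
    (w : EuclideanSpace ℝ (Fin d)) : ℝ := ∫ u, f (w + u) ∂(unifMeas d (α / 2))

/-!
On `B̄_κ` the mean `f = E[F(·,ξ)]` is Lipschitz with constant `L₀ = E[L₀(ξ)]`, so
`|f_α(w) − f(w)| ≤ L₀ E‖u‖ ≤ L₀ √(E‖u‖²)` by Jensen. Pulled back to `Fin d → ℝ`, the uniform law
on the cube is the product of the uniform laws on `[−α/2, α/2]`, each of second moment `α²/12`;
hence `E‖u‖² = d α²/12`.
-/

open ProbabilityTheory Set
open scoped ENNReal

theorem cond_pi_pi {ι : Type*} [Fintype ι] {α : ι → Type*} [∀ i, MeasurableSpace (α i)]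
    {μ : ∀ i, Measure (α i)} [∀ i, SigmaFinite (μ i)] {s : ∀ i, Set (α i)}
    (hs : ∀ i, MeasurableSet (s i)) (hfin : ∀ i, μ i (s i) ≠ ∞) :
    (Measure.pi μ)[|univ.pi s] = Measure.pi fun i => (μ i)[|s i] := by
  refine (Measure.pi_eq fun t ht => ?_).symm
  rw [cond_apply (MeasurableSet.univ_pi hs), ← pi_inter_distrib, Measure.pi_pi, Measure.pi_pi,
    ENNReal.prod_inv_distrib fun i _ j _ _ => Or.inr (hfin j), ← Finset.prod_mul_distrib]
  exact Finset.prod_congr rfl fun i _ => (cond_apply (hs i) _ _).symm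

theorem MeasureTheory.MeasurePreserving.map_cond {X Y : Type*} [MeasurableSpace X]
    [MeasurableSpace Y] {μ : Measure X} {ν : Measure Y} {e : X ≃ᵐ Y}
    (he : MeasurePreserving e μ ν) (s : Set Y) :
    (μ[|e ⁻¹' s]).map e = ν[|s] := by
  rw [ProbabilityTheory.cond, ProbabilityTheory.cond, Measure.map_smul, ← e.restrict_map,
    he.map_eq, he.measure_preimage_equiv]

theorem integral_le_sqrt_integral_sq {Ω : Type*} [MeasurableSpace Ω] {μ : Measure Ω}
    [IsProbabilityMeasure μ] {X : Ω → ℝ} (hX : MemLp X 2 μ) :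
    ∫ ω, X ω ∂μ ≤ √(∫ ω, X ω ^ 2 ∂μ) := by
  have h := variance_nonneg X μ
  rw [variance_eq_sub hX] at h
  exact Real.le_sqrt_of_sq_le (by simpa using h)

theorem abs_integral_sub_le_integral {Ω : Type*} [MeasurableSpace Ω] {μ : Measure Ω}
    [IsProbabilityMeasure μ] {h k : Ω → ℝ} {c : ℝ} (hh : AEStronglyMeasurable h μ)
    (hk : Integrable k μ) (hle : ∀ᵐ ω ∂μ, |h ω - c| ≤ k ω) :
    |∫ ω, h ω ∂μ - c| ≤ ∫ ω, k ω ∂μ := by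
  have hsub : Integrable (fun ω => h ω - c) μ :=
    hk.mono' (hh.sub aestronglyMeasurable_const) (by simpa only [Real.norm_eq_abs] using hle)
  have hint : Integrable h μ :=
    (hsub.add (integrable_const c)).congr (ae_of_all _ fun ω => sub_add_cancel (h ω) c)
  calc |∫ ω, h ω ∂μ - c| = |∫ ω, (h ω - c) ∂μ| := by
        rw [integral_sub hint (integrable_const c), integral_const, probReal_univ, one_smul]
    _ ≤ ∫ ω, |h ω - c| ∂μ := abs_integral_le_integral_abs
    _ ≤ ∫ ω, k ω ∂μ := integral_mono_ae hsub.abs hk hle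

section ParametricIntegral

variable {X Ω : Type*} [SeminormedAddCommGroup X] [MeasurableSpace Ω] {μ : Measure Ω}
  {F : X → Ω → ℝ} {L : Ω → ℝ} {x y : X}

theorem abs_integral_sub_integral_le (hx : Integrable (F x) μ) (hy : Integrable (F y) μ)
    (hL : Integrable L μ) (h : ∀ᵐ ξ ∂μ, |F x ξ - F y ξ| ≤ L ξ * ‖x - y‖) :
    |∫ ξ, F x ξ ∂μ - ∫ ξ, F y ξ ∂μ| ≤ (∫ ξ, L ξ ∂μ) * ‖x - y‖ := by
  rw [← integral_sub hx hy, ← integral_mul_const]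
  exact abs_integral_le_integral_abs.trans (integral_mono_ae (hx.sub hy).abs (hL.mul_const _) h)

theorem integral_nonneg_of_abs_sub_le_mul_norm (hxy : 0 < ‖x - y‖)
    (h : ∀ᵐ ξ ∂μ, |F x ξ - F y ξ| ≤ L ξ * ‖x - y‖) : 0 ≤ ∫ ξ, L ξ ∂μ :=
  integral_nonneg_of_ae <| h.mono fun _ hξ =>
    nonneg_of_mul_nonneg_left ((abs_nonneg _).trans hξ) hxy

end ParametricIntegral

section SecondMoment

variable {ι : Type*} [Fintype ι] {ν : Measure ℝ} [IsProbabilityMeasure ν]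

theorem integrable_sq_eval_pi (h : Integrable (fun t : ℝ => t ^ 2) ν) (i : ι) :
    Integrable (fun x : ι → ℝ => x i ^ 2) (Measure.pi fun _ => ν) :=
  (measurePreserving_eval _ i).integrable_comp_of_integrable (g := fun t : ℝ => t ^ 2) h

theorem integrable_sum_sq_pi (h : Integrable (fun t : ℝ => t ^ 2) ν) :
    Integrable (fun x : ι → ℝ => ∑ i, x i ^ 2) (Measure.pi fun _ => ν) :=
  integrable_finsetSum _ fun i _ => integrable_sq_eval_pi h i

theorem integral_sum_sq_pi (h : Integrable (fun t : ℝ => t ^ 2) ν) :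
    ∫ x : ι → ℝ, ∑ i, x i ^ 2 ∂(Measure.pi fun _ => ν) = Fintype.card ι * ∫ t, t ^ 2 ∂ν := by
  have heval (i : ι) : ∫ x : ι → ℝ, x i ^ 2 ∂(Measure.pi fun _ => ν) = ∫ t, t ^ 2 ∂ν := by
    have hmap := integral_map (μ := Measure.pi fun _ : ι => ν) (φ := Function.eval i)
      (f := fun t : ℝ => t ^ 2) (measurable_pi_apply i).aemeasurable
      (continuous_pow 2).aestronglyMeasurable
    rwa [(measurePreserving_eval _ i).map_eq, eq_comm] at hmap
  rw [integral_finsetSum _ fun i _ => integrable_sq_eval_pi h i]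
  simp only [heval, Finset.sum_const, Finset.card_univ, nsmul_eq_mul]

end SecondMoment

theorem isProbabilityMeasure_cond_Icc {a b : ℝ} (hab : a < b) :
    IsProbabilityMeasure volume[|Icc a b] :=
  cond_isProbabilityMeasure_of_finite (by simpa using hab) measure_Icc_lt_top.ne

theorem integrable_sq_cond_Icc {r : ℝ} (hr : 0 < r) :
    Integrable (fun t : ℝ => t ^ 2) volume[|Icc (-r) r] := by
  rw [ProbabilityTheory.cond]
  refine (show IntegrableOn (fun t : ℝ => t ^ 2) (Icc (-r) r) from
    (continuous_pow 2).continuousOn.integrableOn_compact isCompact_Icc).smul_measure ?_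
  simp
  linarith

theorem integral_sq_cond_Icc {r : ℝ} (hr : 0 < r) :
    ∫ t, t ^ 2 ∂volume[|Icc (-r) r] = r ^ 2 / 3 := by
  rw [ProbabilityTheory.cond, integral_smul_measure, integral_Icc_eq_integral_Ioc,
    ← intervalIntegral.integral_of_le (by linarith), integral_pow, Real.volume_Icc,
    ENNReal.toReal_inv, ENNReal.toReal_ofReal (by linarith), smul_eq_mul]
  field_simp
  ring

section Binf

variable {d : ℕ} {a b : ℝ}

theorem Binf_mono (hab : a ≤ b) : Binf d a ⊆ Binf d b := fun _ hz i => (hz i).trans hab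

theorem add_mem_Binf {w u : EuclideanSpace ℝ (Fin d)} (hw : w ∈ Binf d a) (hu : u ∈ Binf d b) :
    w + u ∈ Binf d (a + b) := fun i => (abs_add_le _ _).trans (add_le_add (hw i) (hu i))

theorem single_mem_Binf (ha : 0 ≤ a) (i : Fin d) : EuclideanSpace.single i a ∈ Binf d a := by
  intro j
  by_cases hj : j = i <;> simp [hj, abs_of_nonneg ha, ha]

end Binf

theorem Binf_eq_preimage (d : ℕ) (r : ℝ) :
    Binf d r = (MeasurableEquiv.toLp 2 (Fin d → ℝ)).symm ⁻¹' univ.pi fun _ => Icc (-r) r := by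
  ext z
  simp only [Binf, mem_preimage, mem_univ_pi, mem_Icc, abs_le]
  rfl

theorem measurableSet_Binf (d : ℕ) (r : ℝ) : MeasurableSet (Binf d r) :=
  Binf_eq_preimage d r ▸ (MeasurableEquiv.measurable _) (.univ_pi fun _ => measurableSet_Icc)

theorem map_unifMeas (d : ℕ) (r : ℝ) :
    (unifMeas d r).map (MeasurableEquiv.toLp 2 (Fin d → ℝ)).symm =
      Measure.pi fun _ => volume[|Icc (-r) r] := by
  rw [unifMeas, Binf_eq_preimage, ← ProbabilityTheory.cond,
    (EuclideanSpace.volume_preserving_symm_measurableEquiv_toLp (Fin d)).map_cond, volume_pi,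
    cond_pi_pi (fun _ => measurableSet_Icc) fun _ => measure_Icc_lt_top.ne]

theorem isProbabilityMeasure_unifMeas (d : ℕ) {r : ℝ} (hr : 0 < r) :
    IsProbabilityMeasure (unifMeas d r) := by
  have := isProbabilityMeasure_cond_Icc (neg_lt_self hr)
  constructor
  simpa [Measure.map_apply (MeasurableEquiv.measurable _) MeasurableSet.univ] using
    congrArg (fun μ => μ univ) (map_unifMeas d r)

theorem norm_sq_eq_sum_toLp_symm {d : ℕ} (u : EuclideanSpace ℝ (Fin d)) :
    ‖u‖ ^ 2 = ∑ i, (MeasurableEquiv.toLp 2 (Fin d → ℝ)).symm u i ^ 2 :=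
  EuclideanSpace.real_norm_sq_eq u

theorem integrable_norm_sq_unifMeas (d : ℕ) {r : ℝ} (hr : 0 < r) :
    Integrable (fun u => ‖u‖ ^ 2) (unifMeas d r) := by
  have := isProbabilityMeasure_cond_Icc (neg_lt_self hr)
  have hpi := integrable_sum_sq_pi (ι := Fin d) (integrable_sq_cond_Icc hr)
  rw [← map_unifMeas, integrable_map_equiv] at hpi
  simpa only [Function.comp_def, ← norm_sq_eq_sum_toLp_symm] using hpi

theorem integral_norm_sq_unifMeas (d : ℕ) {r : ℝ} (hr : 0 < r) :
    ∫ u, ‖u‖ ^ 2 ∂(unifMeas d r) = d * r ^ 2 / 3 := by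
  have := isProbabilityMeasure_cond_Icc (neg_lt_self hr)
  simp_rw [norm_sq_eq_sum_toLp_symm]
  rw [← integral_map_equiv (MeasurableEquiv.toLp 2 (Fin d → ℝ)).symm fun x => ∑ i, x i ^ 2,
    map_unifMeas, integral_sum_sq_pi (integrable_sq_cond_Icc hr),
    integral_sq_cond_Icc hr, Fintype.card_fin]
  ring

theorem memLp_norm_unifMeas (d : ℕ) {r : ℝ} (hr : 0 < r) :
    MemLp (fun u : EuclideanSpace ℝ (Fin d) => ‖u‖) 2 (unifMeas d r) :=
  (memLp_two_iff_integrable_sq continuous_norm.aestronglyMeasurable).2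
    (integrable_norm_sq_unifMeas d hr)

theorem integral_norm_unifMeas_le (d : ℕ) {r : ℝ} (hr : 0 < r) :
    ∫ u, ‖u‖ ∂(unifMeas d r) ≤ √(d * r ^ 2 / 3) := by
  have := isProbabilityMeasure_unifMeas d hr
  rw [← integral_norm_sq_unifMeas d hr]
  exact integral_le_sqrt_integral_sq (memLp_norm_unifMeas d hr)

theorem abs_smoothed_sub_le {d : ℕ} {α β κ C : ℝ} (hα : 0 < α) (hκ : β + α / 2 ≤ κ)
    {g : EuclideanSpace ℝ (Fin d) → ℝ}
    (hg : ∀ x ∈ Binf d κ, ∀ y ∈ Binf d κ, |g x - g y| ≤ C * ‖x - y‖)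
    {w : EuclideanSpace ℝ (Fin d)} (hw : w ∈ Binf d β) :
    |smoothed α g w - g w| ≤ C * ∫ u, ‖u‖ ∂(unifMeas d (α / 2)) := by
  have hr : 0 < α / 2 := half_pos hα
  have := isProbabilityMeasure_unifMeas d hr
  have hshift (u) (hu : u ∈ Binf d (α / 2)) : w + u ∈ Binf d κ :=
    Binf_mono hκ (add_mem_Binf hw hu)
  have hcont : ContinuousOn g (Binf d κ) :=
    (LipschitzOnWith.of_dist_le' fun x hx y hy => by
      rw [Real.dist_eq, dist_eq_norm]
      exact hg x hx y hy).continuousOn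
  rw [← integral_const_mul]
  refine abs_integral_sub_le_integral ?_
    (((memLp_norm_unifMeas d hr).integrable one_le_two).const_mul C) ?_
  · exact ((hcont.comp (continuous_const_add w).continuousOn hshift).aestronglyMeasurable
      (measurableSet_Binf d _)).smul_measure _
  · filter_upwards [ae_cond_mem (measurableSet_Binf d (α / 2))] with u hu
    simpa using hg _ (hshift u hu) w (Binf_mono (by linarith) hw)

theorem smoothed_approximation_error_general
    (d p : ℕ) (α β κ : ℝ) (hα : 0 < α) (hκ : β + α / 2 < κ)
    (μξ : Measure (EuclideanSpace ℝ (Fin p))) [IsProbabilityMeasure μξ]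
    (F : EuclideanSpace ℝ (Fin d) → EuclideanSpace ℝ (Fin p) → ℝ)
    (L0 : EuclideanSpace ℝ (Fin p) → ℝ) (hL0meas : Measurable L0)
    (hL0sq : Integrable (fun ξ => (L0 ξ) ^ 2) μξ)
    (hlip : ∀ᵐ ξ ∂μξ, ∀ w ∈ Binf d κ, ∀ w' ∈ Binf d κ,
      |F w ξ - F w' ξ| ≤ L0 ξ * ‖w - w'‖)
    (hFint : ∀ w ∈ Binf d κ, Integrable (fun ξ => F w ξ) μξ)
    :
    ∀ w ∈ Binf d β,
      |smoothed α (fbar μξ F) w - fbar μξ F w| ≤ α * (∫ ξ, L0 ξ ∂μξ) * Real.sqrt (d / 12) := by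
  intro w hw
  have hr : 0 < α / 2 := half_pos hα
  have hL0 : Integrable L0 μξ :=
    ((memLp_two_iff_integrable_sq hL0meas.aestronglyMeasurable).2 hL0sq).integrable one_le_two
  have hlipF (x) (hx : x ∈ Binf d κ) (y) (hy : y ∈ Binf d κ) :
      ∀ᵐ ξ ∂μξ, |F x ξ - F y ξ| ≤ L0 ξ * ‖x - y‖ :=
    hlip.mono fun _ h => h x hx y hy
  have hmain := abs_smoothed_sub_le (g := fbar μξ F) hα hκ.le (fun x hx y hy =>
    abs_integral_sub_integral_le (hFint x hx) (hFint y hy) hL0 (hlipF x hx y hy)) hw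
  rcases d.eq_zero_or_pos with rfl | hd
  · have hnorm (u : EuclideanSpace ℝ (Fin 0)) : ‖u‖ = 0 := by rw [Subsingleton.elim u 0, norm_zero]
    simpa [hnorm] using hmain
  have hC : 0 ≤ ∫ ξ, L0 ξ ∂μξ := by
    have hi := Binf_mono hκ.le (add_mem_Binf hw (single_mem_Binf hr.le ⟨0, hd⟩))
    refine integral_nonneg_of_abs_sub_le_mul_norm ?_ (hlipF _ hi w (Binf_mono (by linarith) hw))
    simpa [abs_of_pos hr] using hα.ne'
  calc _ ≤ _ := hmain
    _ ≤ (∫ ξ, L0 ξ ∂μξ) * √(d * (α / 2) ^ 2 / 3) :=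
      mul_le_mul_of_nonneg_left (integral_norm_unifMeas_le d hr) hC
    _ = α * (∫ ξ, L0 ξ ∂μξ) * √(d / 12) := by
      rw [show (d : ℝ) * (α / 2) ^ 2 / 3 = α ^ 2 * (d / 12) by ring,
        Real.sqrt_mul (sq_nonneg α), Real.sqrt_sq hα.le]
      ring

/-- For all `w ∈ B̄_β`, `|f_α(w) − f(w)| ≤ α·L₀·√(d/12)`, where `L₀ := E[L₀(ξ)]`. -/
theorem smoothed_approximation_error
    (d p : ℕ) (α β κ : ℝ) (hα : 0 < α) (hβ : 0 < β) (hκ : β + α / 2 < κ)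
    (μξ : Measure (EuclideanSpace ℝ (Fin p))) [IsProbabilityMeasure μξ]
    (F : EuclideanSpace ℝ (Fin d) → EuclideanSpace ℝ (Fin p) → ℝ)
    (hFmeas : Measurable (Function.uncurry F))
    (hFcont : ∀ ξ, ContinuousOn (fun w => F w ξ) (Binf d κ))
    (L0 : EuclideanSpace ℝ (Fin p) → ℝ) (hL0meas : Measurable L0)
    (hL0sq : Integrable (fun ξ => (L0 ξ) ^ 2) μξ)
    (hlip : ∀ᵐ ξ ∂μξ, ∀ w ∈ Binf d κ, ∀ w' ∈ Binf d κ,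
      |F w ξ - F w' ξ| ≤ L0 ξ * ‖w - w'‖)
    (hFint : ∀ w ∈ Binf d κ, Integrable (fun ξ => F w ξ) μξ)
    :
    ∀ w ∈ Binf d β,
      |smoothed α (fbar μξ F) w - fbar μξ F w| ≤ α * (∫ ξ, L0 ξ ∂μξ) * Real.sqrt (d / 12) :=
  smoothed_approximation_error_general d p α β κ hα hκ μξ F L0 hL0meas hL0sq hlip hFint
end
end

section
/- For any w ∈ ℝ^d, let Z* be the set of optimal solutions of the 0-1 knapsack problem: maximize Σ_{i=1}^n z_i ‖w^i‖₂² over z ∈ {0,1}^n subject to Σ_{i=1}^n z_i p_i ≤ m. Then the set of Euclidean projections of w onto C equals { x ∈ ℝ^d : there exists z* ∈ Z* such that for all i ∈ {1,…,n}, x^i = w^i if z*_i = 1 and x^i = 0 if z*_i = 0 }. -/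
/-!
For `z ∈ {0,1}^n` let `w_z` keep the blocks `w^i` with `z_i = 1` and zero the others. If the
blocks of `y` vanish outside `z`, then `‖w - y‖² = ‖w - w_z‖² + ‖w_z - y‖²`, while
`‖w - w_z‖² = ‖w‖² - Σ_i z_i ‖w^i‖²`. Taking for `z` the block support of `y`, a point of `C` is
never closer to `w` than the mask `w_z`, which lies in `C` as well (masking only shrinks the
support and `p ≥ 0`), and it is exactly as close only if it equals `w_z`. Hence the projections
are the masks `w_z`, and minimizing `‖w - w_z‖` over feasible `z` is the knapsack problem.
-/

open MeasureTheory Filter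
open scoped Classical BigOperators

noncomputable section

/-- The weighted group `l0`-norm constraint set
`C := {w : Σ_i p_i · 1_{w^i ≠ 0}(w) ≤ m}`, where the partition of coordinates into `n` blocks
is encoded by `blk : Fin d → Fin n` (coordinate `j` belongs to block `blk j`). -/
def groupC (d n : ℕ) (blk : Fin d → Fin n) (p : Fin n → ℝ) (m : ℝ) :
    Set (EuclideanSpace ℝ (Fin d)) :=
  {w | (∑ i : Fin n, if ∃ j, blk j = i ∧ w j ≠ 0 then p i else 0) ≤ m}

/-- The objective value `Σ_i z_i ‖w^i‖₂²` of the 0-1 knapsack problem associated with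
projecting `w` onto `C`. -/
def knapObj {d n : ℕ} (blk : Fin d → Fin n)
    (w : EuclideanSpace ℝ (Fin d)) (z : Fin n → Bool) : ℝ :=
  ∑ i : Fin n, if z i then (∑ j ∈ Finset.univ.filter (fun j => blk j = i), (w j) ^ 2) else 0

section BlockMask

variable {ι κ : Type*} (blk : ι → κ)

def blockMask (z : κ → Bool) (w : EuclideanSpace ℝ ι) : EuclideanSpace ℝ ι :=
  WithLp.toLp 2 fun j => if z (blk j) then w j else 0

def blockSupport (x : EuclideanSpace ℝ ι) (i : κ) : Bool :=
  decide (∃ j, blk j = i ∧ x j ≠ 0)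

@[simp]
lemma blockMask_apply (z : κ → Bool) (w : EuclideanSpace ℝ ι) (j : ι) :
    blockMask blk z w j = if z (blk j) then w j else 0 := rfl

lemma apply_eq_zero_of_blockSupport_eq_false {x : EuclideanSpace ℝ ι} {j : ι}
    (h : blockSupport blk x (blk j) = false) : x j = 0 := by
  by_contra hx
  simp only [blockSupport, decide_eq_false_iff_not, not_exists, not_and] at h
  exact h j rfl hx

lemma blockMask_blockSupport (x : EuclideanSpace ℝ ι) :
    blockMask blk (blockSupport blk x) x = x := by
  ext j
  cases h : blockSupport blk x (blk j)
  · simp [h, apply_eq_zero_of_blockSupport_eq_false blk h]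
  · simp [h]

lemma blockSupport_blockMask_le (z : κ → Bool) (w : EuclideanSpace ℝ ι) :
    blockSupport blk (blockMask blk z w) ≤ z := by
  intro i
  rw [Bool.le_iff_imp]
  intro h
  simp only [blockSupport, decide_eq_true_eq, blockMask_apply] at h
  obtain ⟨j, rfl, hj⟩ := h
  by_contra hz
  simp [hz] at hj

lemma norm_sub_sq_eq_norm_sub_blockMask_sq_add [Fintype ι] (z : κ → Bool)
    {w y : EuclideanSpace ℝ ι} (hy : blockMask blk z y = y) :
    ‖w - y‖ ^ 2 = ‖w - blockMask blk z w‖ ^ 2 + ‖blockMask blk z w - y‖ ^ 2 := by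
  simp only [EuclideanSpace.real_norm_sq_eq, ← Finset.sum_add_distrib]
  refine Finset.sum_congr rfl fun j _ => ?_
  rw [← hy]
  cases h : z (blk j) <;> simp [h]

lemma norm_sub_blockMask_blockSupport_le [Fintype ι] (w y : EuclideanSpace ℝ ι) :
    ‖w - blockMask blk (blockSupport blk y) w‖ ≤ ‖w - y‖ := by
  refine le_of_pow_le_pow_left₀ two_ne_zero (norm_nonneg _) ?_
  rw [norm_sub_sq_eq_norm_sub_blockMask_sq_add blk _ (blockMask_blockSupport blk y)]
  exact le_add_of_nonneg_right (sq_nonneg _)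

lemma blockMask_blockSupport_eq_of_norm_sub_le [Fintype ι] {w y : EuclideanSpace ℝ ι}
    (h : ‖w - y‖ ≤ ‖w - blockMask blk (blockSupport blk y) w‖) :
    blockMask blk (blockSupport blk y) w = y := by
  have hsq := pow_le_pow_left₀ (norm_nonneg _) h 2
  rw [norm_sub_sq_eq_norm_sub_blockMask_sq_add blk _ (blockMask_blockSupport blk y)] at hsq
  have : ‖blockMask blk (blockSupport blk y) w - y‖ ^ 2 = 0 :=
    le_antisymm (by linarith) (sq_nonneg _)
  simpa [sub_eq_zero] using this

end BlockMask

def knapWeight {κ : Type*} [Fintype κ] (p : κ → ℝ) (z : κ → Bool) : ℝ :=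
  ∑ i, if z i then p i else 0

lemma knapWeight_mono {κ : Type*} [Fintype κ] {p : κ → ℝ} (hp : ∀ i, 0 ≤ p i)
    {z z' : κ → Bool} (h : z ≤ z') :
    knapWeight p z ≤ knapWeight p z' := by
  refine Finset.sum_le_sum fun i _ => ?_
  cases hz : z i
  · rw [if_neg Bool.false_ne_true]
    split_ifs <;> simp [hp i]
  · simp [Bool.le_iff_imp.1 (h i) hz]

section GroupC

variable {d n : ℕ} (blk : Fin d → Fin n)

lemma mem_groupC_iff {p : Fin n → ℝ} {m : ℝ} {x : EuclideanSpace ℝ (Fin d)} :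
    x ∈ groupC d n blk p m ↔ knapWeight p (blockSupport blk x) ≤ m := by
  simp [groupC, knapWeight, blockSupport]

lemma blockMask_mem_groupC {p : Fin n → ℝ} (hp : ∀ i, 0 ≤ p i) {m : ℝ} {z : Fin n → Bool}
    (hz : knapWeight p z ≤ m) (w : EuclideanSpace ℝ (Fin d)) :
    blockMask blk z w ∈ groupC d n blk p m :=
  (mem_groupC_iff blk).2 <| (knapWeight_mono hp (blockSupport_blockMask_le blk z w)).trans hz

lemma knapObj_eq_sum (w : EuclideanSpace ℝ (Fin d)) (z : Fin n → Bool) :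
    knapObj blk w z = ∑ j, if z (blk j) then w j ^ 2 else 0 := by
  rw [knapObj, ← Finset.sum_fiberwise Finset.univ blk]
  refine Finset.sum_congr rfl fun i _ => ?_
  split_ifs with hz
  · exact Finset.sum_congr rfl fun j hj => by rw [(Finset.mem_filter.1 hj).2, if_pos hz]
  · exact (Finset.sum_eq_zero fun j hj => by rw [(Finset.mem_filter.1 hj).2, if_neg hz]).symm

lemma norm_sub_blockMask_sq (w : EuclideanSpace ℝ (Fin d)) (z : Fin n → Bool) :
    ‖w - blockMask blk z w‖ ^ 2 = ‖w‖ ^ 2 - knapObj blk w z := by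
  simp only [EuclideanSpace.real_norm_sq_eq, knapObj_eq_sum, ← Finset.sum_sub_distrib]
  refine Finset.sum_congr rfl fun j _ => ?_
  cases h : z (blk j) <;> simp [h]

lemma norm_sub_blockMask_le_iff (w : EuclideanSpace ℝ (Fin d)) (z z' : Fin n → Bool) :
    ‖w - blockMask blk z w‖ ≤ ‖w - blockMask blk z' w‖ ↔ knapObj blk w z' ≤ knapObj blk w z := by
  rw [← pow_le_pow_iff_left₀ (norm_nonneg _) (norm_nonneg _) two_ne_zero,
    norm_sub_blockMask_sq, norm_sub_blockMask_sq, sub_le_sub_iff_left]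

end GroupC

theorem projection_onto_C_general
    (d n : ℕ) (blk : Fin d → Fin n)
    (p : Fin n → ℝ) (hp : ∀ i, 0 < p i) (m : ℝ)
    (w : EuclideanSpace ℝ (Fin d)) :
    {x : EuclideanSpace ℝ (Fin d) |
        x ∈ groupC d n blk p m ∧
        ∀ y ∈ groupC d n blk p m, ‖w - x‖ ≤ ‖w - y‖}
      = {x : EuclideanSpace ℝ (Fin d) |
          ∃ z : Fin n → Bool,
            ((∑ i : Fin n, if z i then p i else 0) ≤ m ∧
              ∀ z' : Fin n → Bool, (∑ i : Fin n, if z' i then p i else 0) ≤ m →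
                knapObj blk w z' ≤ knapObj blk w z) ∧
            ∀ j : Fin d, x j = if z (blk j) then w j else 0} := by
  have hp₀ : ∀ i, 0 ≤ p i := fun i => (hp i).le
  ext x
  constructor
  · rintro ⟨hxC, hxmin⟩
    have hzC : knapWeight p (blockSupport blk x) ≤ m := (mem_groupC_iff blk).1 hxC
    have hx : blockMask blk (blockSupport blk x) w = x :=
      blockMask_blockSupport_eq_of_norm_sub_le blk (hxmin _ (blockMask_mem_groupC blk hp₀ hzC w))
    refine ⟨blockSupport blk x, ⟨hzC, fun z' hz' => ?_⟩, fun j => (congrArg (· j) hx).symm⟩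
    rw [← norm_sub_blockMask_le_iff, hx]
    exact hxmin _ (blockMask_mem_groupC blk hp₀ hz' w)
  · rintro ⟨z, ⟨hzC, hzopt⟩, hx⟩
    obtain rfl : x = blockMask blk z w := PiLp.ext hx
    refine ⟨blockMask_mem_groupC blk hp₀ hzC w, fun y hy => ?_⟩
    calc ‖w - blockMask blk z w‖
        ≤ ‖w - blockMask blk (blockSupport blk y) w‖ :=
          (norm_sub_blockMask_le_iff blk w _ _).2 (hzopt _ ((mem_groupC_iff blk).1 hy))
      _ ≤ ‖w - y‖ := norm_sub_blockMask_blockSupport_le blk w y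

/-- The set of Euclidean projections of `w` onto `C` equals the set of points
`x` obtained from some optimal solution `z*` of the 0-1 knapsack problem
`max Σ z_i ‖w^i‖₂²  s.t. Σ z_i p_i ≤ m` by setting, blockwise, `x^i = w^i` when `z*_i = 1`
and `x^i = 0` when `z*_i = 0`. -/
theorem projection_onto_C
    (d n : ℕ) (blk : Fin d → Fin n) (hblk : Function.Surjective blk)
    (p : Fin n → ℝ) (hp : ∀ i, 0 < p i) (m : ℝ) (hm : 0 < m)
    (w : EuclideanSpace ℝ (Fin d)) :
    {x : EuclideanSpace ℝ (Fin d) |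
        x ∈ groupC d n blk p m ∧
        ∀ y ∈ groupC d n blk p m, ‖w - x‖ ≤ ‖w - y‖}
      = {x : EuclideanSpace ℝ (Fin d) |
          ∃ z : Fin n → Bool,
            ((∑ i : Fin n, if z i then p i else 0) ≤ m ∧
              ∀ z' : Fin n → Bool, (∑ i : Fin n, if z' i then p i else 0) ≤ m →
                knapObj blk w z' ≤ knapObj blk w z) ∧
            ∀ j : Fin d, x j = if z (blk j) then w j else 0} :=
  projection_onto_C_general d n blk p hp m w
end
end
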